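/- Let \(X, Y\) be integrable real random variables on a probability space. Then \(\mathbb{E}(Y \mid X) = X\) almost surely if and only if \(\mathbb{E}(Y \mid \mathcal{L}(X)) = X\) almost surely, where the first is the conditional expectation given the \(\sigma\)-algebra \(\sigma(X)\) and the second is the conditional expectation given the \(\sigma\)-lattice \(\mathcal{L}(X)\). -/

import Mathlib

open MeasureTheory

/-- A σ-lattice on `Ω`. -/
def IsSigmaLattice {Ω : Type*} (𝒜 : Set (Set Ω)) : Prop :=
  ∅ ∈ 𝒜 ∧ Set.univ ∈ 𝒜 ∧
  (∀ f : ℕ → Set Ω, (∀ n, f n ∈ 𝒜) → (⋃ n, f n) ∈ 𝒜) ∧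
  (∀ f : ℕ → Set Ω, (∀ n, f n ∈ 𝒜) → (⋂ n, f n) ∈ 𝒜)

/-- The smallest σ-lattice containing a family `E` of subsets. -/
def sigmaLatticeGenerated {Ω : Type*} (E : Set (Set Ω)) : Set (Set Ω) :=
  ⋂₀ {L | IsSigmaLattice L ∧ E ⊆ L}

/-- `X` is a conditional expectation of `Y` given the σ-lattice `𝒜` (Brunk). -/
def IsLatticeCondExp {Ω : Type*} [MeasurableSpace Ω] (μ : Measure Ω)
    (𝒜 : Set (Set Ω)) (Y X : Ω → ℝ) : Prop :=
  Integrable X μ ∧ (∀ a : ℝ, {ω | a < X ω} ∈ 𝒜) ∧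
  (∀ A ∈ 𝒜, ∫ ω in A, Y ω ∂μ ≤ ∫ ω in A, X ω ∂μ) ∧
  (∀ B : Set Ω, MeasurableSet[MeasurableSpace.comap X inferInstance] B →
    ∫ ω in B, X ω ∂μ = ∫ ω in B, Y ω ∂μ)

theorem condexp_eq_self_iff_lattice_condexp_eq_self
    {Ω : Type*} [MeasurableSpace Ω] (μ : Measure Ω) [IsProbabilityMeasure μ]
    (X Y : Ω → ℝ) (hX : Measurable X)
    (hXi : Integrable X μ) (hYi : Integrable Y μ) :
    (μ[Y | MeasurableSpace.comap X inferInstance] =ᵐ[μ] X) ↔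
      ∃ X' : Ω → ℝ, X' =ᵐ[μ] X ∧
        IsLatticeCondExp μ
          (sigmaLatticeGenerated {s : Set Ω | ∃ a : ℝ, s = {ω | a < X ω}}) Y X' := by
  classical
  have hm : MeasurableSpace.comap X (inferInstance : MeasurableSpace ℝ)
      ≤ ‹MeasurableSpace Ω› := hX.comap_le
  have hXm : Measurable[MeasurableSpace.comap X inferInstance] X := fun s hs => ⟨s, hs, rfl⟩
  have hsub : sigmaLatticeGenerated {s : Set Ω | ∃ a : ℝ, s = {ω | a < X ω}} ⊆
      {s : Set Ω | MeasurableSet[MeasurableSpace.comap X inferInstance] s} := by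
    intro A hA
    refine hA _ ⟨⟨?_, ?_, ?_, ?_⟩, ?_⟩
    · show MeasurableSet[MeasurableSpace.comap X inferInstance] (∅ : Set Ω)
      exact @MeasurableSet.empty Ω (MeasurableSpace.comap X inferInstance)
    · show MeasurableSet[MeasurableSpace.comap X inferInstance] (Set.univ : Set Ω)
      exact @MeasurableSet.univ Ω (MeasurableSpace.comap X inferInstance)
    · intro f hf
      show MeasurableSet[MeasurableSpace.comap X inferInstance] (⋃ n, f n)
      exact MeasurableSet.iUnion fun n =>
        (hf n : MeasurableSet[MeasurableSpace.comap X inferInstance] (f n))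
    · intro f hf
      show MeasurableSet[MeasurableSpace.comap X inferInstance] (⋂ n, f n)
      exact MeasurableSet.iInter fun n =>
        (hf n : MeasurableSet[MeasurableSpace.comap X inferInstance] (f n))
    · rintro s ⟨a, rfl⟩
      exact hXm measurableSet_Ioi
  -- the key generation fact
  have hgen : MeasurableSpace.comap X (inferInstance : MeasurableSpace ℝ)
      = MeasurableSpace.generateFrom {s : Set Ω | ∃ a : ℝ, s = {ω | a < X ω}} := by
    conv_lhs => rw [(inferInstance : BorelSpace ℝ).measurable_eq, borel_eq_generateFrom_Ioi]
    rw [MeasurableSpace.comap_generateFrom]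
    congr 1
    ext s
    constructor
    · rintro ⟨u, ⟨a, rfl⟩, rfl⟩
      exact ⟨a, rfl⟩
    · rintro ⟨a, rfl⟩
      exact ⟨Set.Ioi a, ⟨a, rfl⟩, rfl⟩
  constructor
  · intro h
    have key : ∀ B : Set Ω, MeasurableSet[MeasurableSpace.comap X inferInstance] B →
        ∫ ω in B, X ω ∂μ = ∫ ω in B, Y ω ∂μ := by
      intro B hB
      rw [← setIntegral_condExp hm hYi hB]
      exact integral_congr_ae (ae_restrict_of_ae (h.mono fun ω hω => hω.symm))
    refine ⟨X, ae_eq_refl X, hXi, ?_, ?_, key⟩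
    · intro a L hL
      exact hL.2 ⟨a, rfl⟩
    · intro A hA
      exact (key A (hsub hA)).symm.le
  · rintro ⟨X', hX'eq, _, _, _, hint⟩
    have hX'univ : ∫ ω, X ω ∂μ = ∫ ω, Y ω ∂μ := by
      have := hint Set.univ MeasurableSet.univ
      simp only [Measure.restrict_univ] at this
      rw [← this]
      exact integral_congr_ae hX'eq.symm
    -- equality on the generating sets {a < X}
    have hbasic : ∀ a : ℝ, ∫ ω in {ω | a < X ω}, X ω ∂μ = ∫ ω in {ω | a < X ω}, Y ω ∂μ := by
      intro a
      have hset : {ω | a < X' ω} =ᵐ[μ] {ω | a < X ω} := by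
        filter_upwards [hX'eq] with ω hω
        show (a < X' ω) = (a < X ω)
        rw [hω]
      have h1 := hint {ω | a < X' ω} ⟨Set.Ioi a, measurableSet_Ioi, rfl⟩
      calc ∫ ω in {ω | a < X ω}, X ω ∂μ
          = ∫ ω in {ω | a < X' ω}, X ω ∂μ := (setIntegral_congr_set hset).symm
        _ = ∫ ω in {ω | a < X' ω}, X' ω ∂μ :=
            integral_congr_ae (ae_restrict_of_ae hX'eq.symm)
        _ = ∫ ω in {ω | a < X' ω}, Y ω ∂μ := h1
        _ = ∫ ω in {ω | a < X ω}, Y ω ∂μ := setIntegral_congr_set hset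
    have key : ∀ s : Set Ω, MeasurableSet[MeasurableSpace.comap X inferInstance] s →
        ∫ ω in s, X ω ∂μ = ∫ ω in s, Y ω ∂μ := by
      refine MeasurableSpace.induction_on_inter
        (C := fun s _ => ∫ ω in s, X ω ∂μ = ∫ ω in s, Y ω ∂μ)
        (s := {s : Set Ω | ∃ a : ℝ, s = {ω | a < X ω}})
        (m := MeasurableSpace.comap X inferInstance) hgen ?_ (by simp) ?_ ?_ ?_
      · rintro s ⟨a, rfl⟩ t ⟨b, rfl⟩ -
        exact ⟨max a b, by ext ω; simp [max_lt_iff, Set.mem_setOf_eq, and_comm]⟩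
      · rintro s ⟨a, rfl⟩
        exact hbasic a
      · intro t ht hC
        have ht' : MeasurableSet t := hm t ht
        have h1 := integral_add_compl ht' hXi
        have h2 := integral_add_compl ht' hYi
        rw [← hX'univ] at h2
        linarith
      · intro f hdisj hfm hC
        have hfm' : ∀ i, MeasurableSet (f i) := fun i => hm _ (hfm i)
        rw [integral_iUnion hfm' hdisj hXi.integrableOn,
          integral_iUnion hfm' hdisj hYi.integrableOn]
        exact tsum_congr hC
    exact (ae_eq_condExp_of_forall_setIntegral_eq hm hYi
      (fun s _ _ => hXi.integrableOn) (fun s hs _ => key s hs)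
      (StronglyMeasurable.aestronglyMeasurable hXm.stronglyMeasurable)).symm
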